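/- arXiv:1510.00864 — 6 statements merged into one kernel-verified Lean document; each statement's English description precedes it below -/
import Mathlib

section
/- Let N ≥ 2, let A ∈ ℝ^{N,N}, and let 1 < p < ∞. Then there exists a constant γ_A > 0 such that |z|²·⟨w,Aw⟩ + (p−2)·⟨w,z⟩·⟨z,Aw⟩ ≥ γ_A·|z|²·|w|² for all z, w ∈ ℝ^N if and only if A is invertible and μ₁(A) > |p−2|/p. -/
/-- The action of a real `N × N` matrix on `EuclideanSpace ℝ (Fin N)`. -/
noncomputable def mulE {N : ℕ} (A : Matrix (Fin N) (Fin N) ℝ)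
    (w : EuclideanSpace ℝ (Fin N)) : EuclideanSpace ℝ (Fin N) :=
  Matrix.toEuclideanLin A w

/-- The first antieigenvalue `μ₁(A)` of a real matrix `A`:
`μ₁(A) = inf { ⟨w, Aw⟩ / (|w|·|Aw|) : w ≠ 0, Aw ≠ 0 }`. -/
noncomputable def mu1 {N : ℕ} (A : Matrix (Fin N) (Fin N) ℝ) : ℝ :=
  sInf { x : ℝ | ∃ w : EuclideanSpace ℝ (Fin N), w ≠ 0 ∧ mulE A w ≠ 0 ∧
    x = (inner ℝ w (mulE A w) : ℝ) / (‖w‖ * ‖mulE A w‖) }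

/-!
Fix `w` and put `u = Aw`. On the unit sphere the quadratic form `z ↦ 2⟨z,w⟩⟨z,u⟩` takes its
values in `[⟨w,u⟩ - |w||u|, ⟨w,u⟩ + |w||u|]`, by Cauchy–Schwarz against `|u|w ± |w|u`, and both
ends are attained: at `|u|w ± |w|u` itself, or, when that vector vanishes, at any unit `z ⊥ w`,
which exists because `N ≥ 2`. Hence the infimum over `|z| = 1` of the left-hand side is
`(p⟨w,Aw⟩ - |p-2||w||Aw|)/2`, and the condition becomes `p⟨w,Aw⟩ - |p-2||w||Aw| ≥ 2γ|w|²`.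
This forces `A` to be injective and, as `|Aw| ≤ ‖A‖|w|`, gives `μ₁(A) ≥ |p-2|/p + 2γ/(p‖A‖)`.
Conversely, if `A` is invertible then `|w|² ≤ ‖A⁻¹‖|w||Aw|`, so the margin `pμ₁(A) - |p-2| > 0`
yields `γ`.
-/

open scoped RealInnerProductSpace
open Module Function

section InnerProductSpace

variable {E : Type*} [NormedAddCommGroup E] [InnerProductSpace ℝ E]

theorem norm_norm_smul_add_norm_smul_sq (w u : E) :
    ‖‖u‖ • w + ‖w‖ • u‖ ^ 2 = 2 * (‖w‖ * ‖u‖) * (⟪w, u⟫ + ‖w‖ * ‖u‖) := by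
  rw [norm_add_sq_real, real_inner_smul_left, real_inner_smul_right, norm_smul, norm_smul,
    norm_norm, norm_norm]
  ring

theorem two_mul_inner_mul_inner_le (z w u : E) :
    2 * (⟪z, w⟫ * ⟪z, u⟫) ≤ (⟪w, u⟫ + ‖w‖ * ‖u‖) * ‖z‖ ^ 2 := by
  rcases eq_or_ne w 0 with rfl | hw
  · simp
  rcases eq_or_ne u 0 with rfl | hu
  · simp
  have hwu : 0 < 2 * (‖w‖ * ‖u‖) := by
    have := norm_pos_iff.2 hw
    have := norm_pos_iff.2 hu
    positivity
  have cs : ⟪z, ‖u‖ • w + ‖w‖ • u⟫ ^ 2 ≤ ‖z‖ ^ 2 * ‖‖u‖ • w + ‖w‖ • u‖ ^ 2 := by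
    rw [← mul_pow, ← sq_abs]
    exact pow_le_pow_left₀ (abs_nonneg _) (abs_real_inner_le_norm _ _) 2
  rw [inner_add_right, real_inner_smul_right, real_inner_smul_right,
    norm_norm_smul_add_norm_smul_sq] at cs
  refine le_of_mul_le_mul_left ?_ hwu
  nlinarith [sq_nonneg (‖u‖ * ⟪z, w⟫ - ‖w‖ * ⟪z, u⟫)]

theorem le_two_mul_inner_mul_inner (z w u : E) :
    (⟪w, u⟫ - ‖w‖ * ‖u‖) * ‖z‖ ^ 2 ≤ 2 * (⟪z, w⟫ * ⟪z, u⟫) := by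
  have := two_mul_inner_mul_inner_le z w (-u)
  simp only [inner_neg_right, norm_neg] at this
  linarith

theorem exists_ne_zero_inner_eq_zero (hE : 2 ≤ finrank ℝ E) (w : E) :
    ∃ z ≠ 0, ⟪z, w⟫ = 0 := by
  have : FiniteDimensional ℝ E := Module.finite_of_finrank_pos (by omega)
  have hker : LinearMap.ker (innerₛₗ ℝ w) ≠ ⊥ :=
    LinearMap.ker_ne_bot_of_finrank_lt (by rw [finrank_self]; omega)
  obtain ⟨z, hz, hz0⟩ := Submodule.exists_mem_ne_zero_of_ne_bot hker
  exact ⟨z, hz0, by rw [real_inner_comm]; exact hz⟩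

theorem exists_two_mul_inner_mul_inner_eq_add (hE : 2 ≤ finrank ℝ E) (w u : E) :
    ∃ z ≠ 0, 2 * (⟪z, w⟫ * ⟪z, u⟫) = (⟪w, u⟫ + ‖w‖ * ‖u‖) * ‖z‖ ^ 2 := by
  set a := ‖u‖ • w + ‖w‖ • u with ha
  have haw : ⟪a, w⟫ = ‖w‖ * (⟪w, u⟫ + ‖w‖ * ‖u‖) := by
    rw [ha, inner_add_left, real_inner_smul_left, real_inner_smul_left,
      real_inner_self_eq_norm_sq, real_inner_comm]
    ring
  have hau : ⟪a, u⟫ = ‖u‖ * (⟪w, u⟫ + ‖w‖ * ‖u‖) := by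
    rw [ha, inner_add_left, real_inner_smul_left, real_inner_smul_left,
      real_inner_self_eq_norm_sq]
    ring
  rcases eq_or_ne a 0 with ha0 | ha0
  · have hs : ⟪w, u⟫ + ‖w‖ * ‖u‖ = 0 := by
      rcases eq_or_ne u 0 with rfl | hu
      · simp
      rw [ha0, inner_zero_left, eq_comm, mul_eq_zero] at hau
      exact hau.resolve_left (norm_ne_zero_iff.2 hu)
    obtain ⟨z, hz, hzw⟩ := exists_ne_zero_inner_eq_zero hE w
    exact ⟨z, hz, by rw [hzw, hs]; ring⟩
  · refine ⟨a, ha0, ?_⟩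
    rw [haw, hau, ha, norm_norm_smul_add_norm_smul_sq]
    ring

theorem exists_two_mul_inner_mul_inner_eq_sub (hE : 2 ≤ finrank ℝ E) (w u : E) :
    ∃ z ≠ 0, 2 * (⟪z, w⟫ * ⟪z, u⟫) = (⟪w, u⟫ - ‖w‖ * ‖u‖) * ‖z‖ ^ 2 := by
  obtain ⟨z, hz, h⟩ := exists_two_mul_inner_mul_inner_eq_add hE w (-u)
  refine ⟨z, hz, ?_⟩
  simp only [inner_neg_right, norm_neg] at h
  linarith

def dissipativityForm (p : ℝ) (z w u : E) : ℝ :=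
  ‖z‖ ^ 2 * ⟪w, u⟫ + (p - 2) * (⟪w, z⟫ * ⟪z, u⟫)

theorem le_dissipativityForm (p : ℝ) (z w u : E) :
    ‖z‖ ^ 2 * (p / 2 * ⟪w, u⟫ - |p - 2| / 2 * (‖w‖ * ‖u‖)) ≤ dissipativityForm p z w u := by
  rw [dissipativityForm, real_inner_comm z w]
  rcases le_total 2 p with hp | hp
  · rw [abs_of_nonneg (sub_nonneg.2 hp)]
    nlinarith [mul_le_mul_of_nonneg_left (le_two_mul_inner_mul_inner z w u) (sub_nonneg.2 hp)]
  · rw [abs_of_nonpos (sub_nonpos.2 hp)]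
    nlinarith [mul_le_mul_of_nonneg_left (two_mul_inner_mul_inner_le z w u) (sub_nonneg.2 hp)]

theorem exists_dissipativityForm_eq (hE : 2 ≤ finrank ℝ E) (p : ℝ) (w u : E) :
    ∃ z ≠ 0, dissipativityForm p z w u
      = ‖z‖ ^ 2 * (p / 2 * ⟪w, u⟫ - |p - 2| / 2 * (‖w‖ * ‖u‖)) := by
  rcases le_total 2 p with hp | hp
  · obtain ⟨z, hz, h⟩ := exists_two_mul_inner_mul_inner_eq_sub hE w u
    refine ⟨z, hz, ?_⟩
    rw [dissipativityForm, real_inner_comm z w, abs_of_nonneg (sub_nonneg.2 hp)]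
    linear_combination (p - 2) / 2 * h
  · obtain ⟨z, hz, h⟩ := exists_two_mul_inner_mul_inner_eq_add hE w u
    refine ⟨z, hz, ?_⟩
    rw [dissipativityForm, real_inner_comm z w, abs_of_nonpos (sub_nonpos.2 hp)]
    linear_combination (p - 2) / 2 * h

theorem forall_le_dissipativityForm_iff (hE : 2 ≤ finrank ℝ E) (p γ : ℝ) (w u : E) :
    (∀ z, γ * (‖z‖ ^ 2 * ‖w‖ ^ 2) ≤ dissipativityForm p z w u)
      ↔ γ * ‖w‖ ^ 2 ≤ p / 2 * ⟪w, u⟫ - |p - 2| / 2 * (‖w‖ * ‖u‖) := by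
  constructor
  · intro h
    obtain ⟨z, hz, hzeq⟩ := exists_dissipativityForm_eq hE p w u
    have hz2 : 0 < ‖z‖ ^ 2 := by
      have := norm_pos_iff.2 hz
      positivity
    refine le_of_mul_le_mul_left ?_ hz2
    linarith [h z]
  · intro h z
    calc γ * (‖z‖ ^ 2 * ‖w‖ ^ 2) = ‖z‖ ^ 2 * (γ * ‖w‖ ^ 2) := by ring
      _ ≤ ‖z‖ ^ 2 * (p / 2 * ⟪w, u⟫ - |p - 2| / 2 * (‖w‖ * ‖u‖)) := by gcongr
      _ ≤ dissipativityForm p z w u := le_dissipativityForm p z w u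

noncomputable def firstAntieigenvalue (T : E →ₗ[ℝ] E) : ℝ :=
  sInf {x | ∃ w, w ≠ 0 ∧ T w ≠ 0 ∧ x = ⟪w, T w⟫ / (‖w‖ * ‖T w‖)}

theorem mu1_eq_firstAntieigenvalue {N : ℕ} (A : Matrix (Fin N) (Fin N) ℝ) :
    mu1 A = firstAntieigenvalue (Matrix.toEuclideanLin A) :=
  rfl

theorem firstAntieigenvalue_mul_le {T : E →ₗ[ℝ] E} (hT : Injective T) (w : E) :
    firstAntieigenvalue T * (‖w‖ * ‖T w‖) ≤ ⟪w, T w⟫ := by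
  rcases eq_or_ne w 0 with rfl | hw
  · simp
  have hTw : T w ≠ 0 := (map_ne_zero_iff T hT).2 hw
  have hbdd : BddBelow {x | ∃ w, w ≠ 0 ∧ T w ≠ 0 ∧ x = ⟪w, T w⟫ / (‖w‖ * ‖T w‖)} := by
    refine ⟨-1, ?_⟩
    rintro _ ⟨v, -, -, rfl⟩
    exact (abs_le.1 (abs_real_inner_div_norm_mul_norm_le_one v (T v))).1
  rw [← le_div_iff₀ (by positivity)]
  exact csInf_le hbdd ⟨w, hw, hTw, rfl⟩

theorem le_firstAntieigenvalue [Nontrivial E] {T : E →ₗ[ℝ] E} (hT : Injective T) {c : ℝ}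
    (h : ∀ w, c * (‖w‖ * ‖T w‖) ≤ ⟪w, T w⟫) : c ≤ firstAntieigenvalue T := by
  obtain ⟨w, hw⟩ := exists_ne (0 : E)
  refine le_csInf ⟨_, w, hw, (map_ne_zero_iff T hT).2 hw, rfl⟩ ?_
  rintro _ ⟨v, hv, hTv, rfl⟩
  rw [le_div_iff₀ (by positivity)]
  exact h v

theorem exists_pos_lower_bound_iff_lt_firstAntieigenvalue [FiniteDimensional ℝ E]
    [Nontrivial E] (T : E →ₗ[ℝ] E) {a : ℝ} (ha : 0 < a) (b : ℝ) :
    (∃ γ, 0 < γ ∧ ∀ w, γ * ‖w‖ ^ 2 ≤ a * ⟪w, T w⟫ - b * (‖w‖ * ‖T w‖))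
      ↔ Injective T ∧ b / a < firstAntieigenvalue T := by
  constructor
  · rintro ⟨γ, hγ, h⟩
    have hT : Injective T := by
      refine (injective_iff_map_eq_zero T).2 fun w hw => ?_
      have hγw : γ * ‖w‖ ^ 2 ≤ 0 := by simpa [hw] using h w
      simpa using (by nlinarith : ‖w‖ ^ 2 ≤ 0)
    obtain ⟨C, hC, hTC⟩ := (LinearMap.toContinuousLinearMap T).bound
    refine ⟨hT, lt_of_lt_of_le (lt_add_of_pos_right (b / a) (by positivity : 0 < γ / (a * C)))
      (le_firstAntieigenvalue hT fun w => ?_)⟩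
    have hγC : γ / C * (‖w‖ * ‖T w‖) ≤ γ * ‖w‖ ^ 2 := by
      have hTw : ‖T w‖ ≤ C * ‖w‖ := hTC w
      rw [div_mul_eq_mul_div, div_le_iff₀ hC]
      nlinarith [mul_le_mul_of_nonneg_left hTw (mul_nonneg hγ.le (norm_nonneg w))]
    rw [← mul_le_mul_iff_of_pos_left ha]
    have hsplit : a * ((b / a + γ / (a * C)) * (‖w‖ * ‖T w‖))
        = b * (‖w‖ * ‖T w‖) + γ / C * (‖w‖ * ‖T w‖) := by
      field_simp
    linarith [h w]
  · rintro ⟨hT, hμ⟩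
    obtain ⟨K, hK, hKT⟩ := T.exists_antilipschitzWith (LinearMap.ker_eq_bot.2 hT)
    have hK' : (0 : ℝ) < K := hK
    have hle : ∀ w, ‖w‖ ≤ K * ‖T w‖ := fun w => by simpa using hKT.le_mul_dist w 0
    have hmargin : 0 < a * firstAntieigenvalue T - b := by
      rw [div_lt_iff₀ ha] at hμ
      linarith
    refine ⟨(a * firstAntieigenvalue T - b) / K, by positivity, fun w => ?_⟩
    calc (a * firstAntieigenvalue T - b) / K * ‖w‖ ^ 2
        ≤ (a * firstAntieigenvalue T - b) * (‖w‖ * ‖T w‖) := by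
          rw [div_mul_eq_mul_div, div_le_iff₀ hK']
          nlinarith [mul_le_mul_of_nonneg_left (mul_le_mul_of_nonneg_left (hle w) (norm_nonneg w))
            hmargin.le]
      _ = a * (firstAntieigenvalue T * (‖w‖ * ‖T w‖)) - b * (‖w‖ * ‖T w‖) := by ring
      _ ≤ a * ⟪w, T w⟫ - b * (‖w‖ * ‖T w‖) := by
          gcongr
          exact firstAntieigenvalue_mul_le hT w

end InnerProductSpace

theorem Matrix.injective_toEuclideanLin_iff {N : ℕ} (A : Matrix (Fin N) (Fin N) ℝ) :
    Injective (Matrix.toEuclideanLin A) ↔ IsUnit A := by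
  rw [← MulEquiv.isUnit_map (Matrix.toLpLinAlgEquiv (R := ℝ) (n := Fin N) 2),
    Module.End.isUnit_iff, Bijective, ← LinearMap.injective_iff_surjective, and_self]
  rfl

/-- The `L^p`-dissipativity condition is equivalent to the `L^p`-antieigenvalue condition
for real matrices of size `N ≥ 2`. -/
theorem stmt_1 {N : ℕ} (hN : 2 ≤ N) (A : Matrix (Fin N) (Fin N) ℝ) (p : ℝ)
    (hp : 1 < p) :
    (∃ γ_A : ℝ, 0 < γ_A ∧ ∀ z w : EuclideanSpace ℝ (Fin N),
      ‖z‖ ^ 2 * (inner ℝ w (mulE A w) : ℝ)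
        + (p - 2) * ((inner ℝ w z : ℝ) * (inner ℝ z (mulE A w) : ℝ))
        ≥ γ_A * (‖z‖ ^ 2 * ‖w‖ ^ 2))
    ↔ (IsUnit A ∧ mu1 A > |p - 2| / p) := by
  have hE : 2 ≤ finrank ℝ (EuclideanSpace ℝ (Fin N)) := by rwa [finrank_euclideanSpace_fin]
  have : Nontrivial (EuclideanSpace ℝ (Fin N)) :=
    Module.nontrivial_of_finrank_pos (R := ℝ) (by omega)
  set T := Matrix.toEuclideanLin A
  calc _ ↔ ∃ γ, 0 < γ ∧ ∀ w, γ * ‖w‖ ^ 2 ≤ p / 2 * ⟪w, T w⟫ - |p - 2| / 2 * (‖w‖ * ‖T w‖) :=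
        exists_congr fun γ => and_congr_right fun _ => forall_comm.trans <|
          forall_congr' fun w => forall_le_dissipativityForm_iff hE p γ w (T w)
    _ ↔ Injective T ∧ |p - 2| / 2 / (p / 2) < firstAntieigenvalue T :=
        exists_pos_lower_bound_iff_lt_firstAntieigenvalue T (by linarith) _
    _ ↔ _ := by
        rw [Matrix.injective_toEuclideanLin_iff, div_div_div_cancel_right₀ two_ne_zero,
          mu1_eq_firstAntieigenvalue]
end

section
/- Let N ≥ 2, let A ∈ ℝ^{N,N}, let b ∈ ℝ with b > −1, and let γ_A > 0. Then the following two statements are equivalent: (i) |z|²·⟨w,Aw⟩ + b·⟨w,z⟩·⟨z,Aw⟩ ≥ γ_A·|z|²·|w|² for all w, z ∈ ℝ^N; (ii) (1 + b/2)·⟨w,Aw⟩ − (|b|/2)·|Aw| ≥ γ_A for all w ∈ ℝ^N with |w| = 1. -/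
open RealInnerProductSpace Module

section InnerProduct

variable {E : Type*} [NormedAddCommGroup E] [InnerProductSpace ℝ E]

/-- `2⟪u,z⟫ z - u` is the reflection of `u` in the line `ℝ z`, so it has norm `‖u‖`. -/
lemma abs_two_mul_inner_mul_inner_sub_inner_le (u v z : E) (hz : ‖z‖ = 1) :
    |2 * ⟪u, z⟫ * ⟪z, v⟫ - ⟪u, v⟫| ≤ ‖u‖ * ‖v‖ := by
  have h_inner : ⟪(2 * ⟪u, z⟫) • z - u, v⟫ = 2 * ⟪u, z⟫ * ⟪z, v⟫ - ⟪u, v⟫ := by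
    rw [inner_sub_left, real_inner_smul_left]
  have h_norm : ‖(2 * ⟪u, z⟫) • z - u‖ = ‖u‖ := by
    refine (sq_eq_sq₀ (norm_nonneg _) (norm_nonneg _)).mp ?_
    rw [norm_sub_sq_real, norm_smul, real_inner_smul_left, real_inner_comm u z, hz,
      Real.norm_eq_abs, mul_pow, sq_abs]
    ring
  rw [← h_inner, ← h_norm]
  exact abs_real_inner_le_norm _ _

lemma exists_norm_eq_one_inner_eq_zero [FiniteDimensional ℝ E] (hE : 2 ≤ finrank ℝ E) (u : E) :
    ∃ z : E, ‖z‖ = 1 ∧ ⟪u, z⟫ = 0 := by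
  have h_span : finrank ℝ (ℝ ∙ u) ≤ 1 := by
    simpa using finrank_span_le_card ({u} : Set E)
  have h_add := Submodule.finrank_add_finrank_orthogonal (ℝ ∙ u)
  obtain ⟨⟨z, hz_mem⟩, hz_ne⟩ :=
    finrank_pos_iff_exists_ne_zero.mp (show 0 < finrank ℝ (ℝ ∙ u)ᗮ by omega)
  have hz : z ≠ 0 := by simpa using hz_ne
  refine ⟨‖z‖⁻¹ • z, norm_smul_inv_norm hz, ?_⟩
  rw [real_inner_smul_right, Submodule.mem_orthogonal_singleton_iff_inner_right.mp hz_mem,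
    mul_zero]

/-- The witness is the direction of `‖v‖ u - v`, or any unit `z ⟂ u` when that vector vanishes. -/
lemma exists_inner_mul_inner_eq_sub [FiniteDimensional ℝ E] (hE : 2 ≤ finrank ℝ E) {u : E}
    (hu : ‖u‖ = 1) (v : E) :
    ∃ z : E, ‖z‖ = 1 ∧ ⟪u, z⟫ * ⟪z, v⟫ = (⟪u, v⟫ - ‖v‖) / 2 := by
  set c := ‖v‖ • u - v
  by_cases hc : c = 0
  · obtain ⟨z, hz, huz⟩ := exists_norm_eq_one_inner_eq_zero hE u
    have huv : ⟪u, v⟫ = ‖v‖ := by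
      calc ⟪u, v⟫ = ⟪u, ‖v‖ • u⟫ := by rw [sub_eq_zero.mp hc]
        _ = ‖v‖ := by rw [real_inner_smul_right, real_inner_self_eq_norm_sq, hu]; ring
    exact ⟨z, hz, by rw [huz, huv]; ring⟩
  have huc : ⟪u, c⟫ = ‖v‖ - ⟪u, v⟫ := by
    rw [inner_sub_right, real_inner_smul_right, real_inner_self_eq_norm_sq, hu]
    ring
  have hcv : ⟪c, v⟫ = -‖v‖ * ⟪u, c⟫ := by
    rw [huc, inner_sub_left, real_inner_smul_left, real_inner_self_eq_norm_sq]
    ring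
  have hcc : ‖c‖ ^ 2 = 2 * ‖v‖ * ⟪u, c⟫ := by
    calc ‖c‖ ^ 2 = ⟪c, ‖v‖ • u - v⟫ := (real_inner_self_eq_norm_sq c).symm
      _ = 2 * ‖v‖ * ⟪u, c⟫ := by
        rw [inner_sub_right, real_inner_smul_right, real_inner_comm u c, hcv]
        ring
  have h_ne : ‖v‖ ≠ 0 ∧ ⟪u, c⟫ ≠ 0 := by
    have := pow_ne_zero 2 (norm_ne_zero_iff.mpr hc)
    rw [hcc] at this
    exact ⟨fun h => this (by rw [h]; ring), fun h => this (by rw [h]; ring)⟩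
  refine ⟨‖c‖⁻¹ • c, norm_smul_inv_norm hc, ?_⟩
  rw [real_inner_smul_right, real_inner_smul_left]
  calc ‖c‖⁻¹ * ⟪u, c⟫ * (‖c‖⁻¹ * ⟪c, v⟫) = -‖v‖ * ⟪u, c⟫ ^ 2 / ‖c‖ ^ 2 := by
        rw [hcv]; field_simp
    _ = -⟪u, c⟫ / 2 := by rw [hcc]; field_simp [h_ne.1, h_ne.2]
    _ = (⟪u, v⟫ - ‖v‖) / 2 := by rw [huc]; ring

lemma exists_inner_mul_inner_eq_add [FiniteDimensional ℝ E] (hE : 2 ≤ finrank ℝ E) {u : E}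
    (hu : ‖u‖ = 1) (v : E) :
    ∃ z : E, ‖z‖ = 1 ∧ ⟪u, z⟫ * ⟪z, v⟫ = (⟪u, v⟫ + ‖v‖) / 2 := by
  obtain ⟨z, hz, h⟩ := exists_inner_mul_inner_eq_sub hE hu (-v)
  refine ⟨z, hz, ?_⟩
  rw [inner_neg_right, inner_neg_right, norm_neg] at h
  linarith

lemma forall_le_add_mul_inner_mul_inner_iff [FiniteDimensional ℝ E] (hE : 2 ≤ finrank ℝ E)
    {u : E} (hu : ‖u‖ = 1) (v : E) (a b γ : ℝ) :
    (∀ z : E, ‖z‖ = 1 → γ ≤ a + b * (⟪u, z⟫ * ⟪z, v⟫)) ↔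
      γ ≤ a + b / 2 * ⟪u, v⟫ - |b| / 2 * ‖v‖ := by
  constructor
  · intro h
    rcases le_or_gt 0 b with hb | hb
    · obtain ⟨z, hz, hz_eq⟩ := exists_inner_mul_inner_eq_sub hE hu v
      have := h z hz
      rw [hz_eq] at this
      rw [abs_of_nonneg hb]
      linarith
    · obtain ⟨z, hz, hz_eq⟩ := exists_inner_mul_inner_eq_add hE hu v
      have := h z hz
      rw [hz_eq] at this
      rw [abs_of_neg hb]
      linarith
  · intro h z hz
    have h_bound := abs_two_mul_inner_mul_inner_sub_inner_le u v z hz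
    rw [hu, one_mul] at h_bound
    have : -(|b| * ‖v‖) ≤ b * (2 * ⟪u, z⟫ * ⟪z, v⟫ - ⟪u, v⟫) := by
      refine neg_le_of_abs_le ?_
      rw [abs_mul]
      exact mul_le_mul_of_nonneg_left h_bound (abs_nonneg b)
    linarith

lemma forall_mul_norm_sq_le_iff_forall_norm_eq_one (T : E →ₗ[ℝ] E) (b γ : ℝ) :
    (∀ w z : E, γ * (‖z‖ ^ 2 * ‖w‖ ^ 2) ≤ ‖z‖ ^ 2 * ⟪w, T w⟫ + b * (⟪w, z⟫ * ⟪z, T w⟫)) ↔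
      ∀ w : E, ‖w‖ = 1 → ∀ z : E, ‖z‖ = 1 → γ ≤ ⟪w, T w⟫ + b * (⟪w, z⟫ * ⟪z, T w⟫) := by
  constructor
  · intro h w hw z hz
    simpa [hw, hz] using h w z
  · intro h w z
    rcases eq_or_ne w 0 with rfl | hw
    · simp
    rcases eq_or_ne z 0 with rfl | hz
    · simp
    have h_unit := h _ (norm_smul_inv_norm (𝕜 := ℝ) hw) _ (norm_smul_inv_norm (𝕜 := ℝ) hz)
    simp only [map_smul, real_inner_smul_left, real_inner_smul_right, RCLike.ofReal_real_eq_id,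
      id_eq] at h_unit
    have hw' : ‖w‖ ≠ 0 := norm_ne_zero_iff.mpr hw
    have hz' : ‖z‖ ≠ 0 := norm_ne_zero_iff.mpr hz
    calc γ * (‖z‖ ^ 2 * ‖w‖ ^ 2) ≤ _ * (‖z‖ ^ 2 * ‖w‖ ^ 2) :=
          mul_le_mul_of_nonneg_right h_unit (by positivity)
      _ = ‖z‖ ^ 2 * ⟪w, T w⟫ + b * (⟪w, z⟫ * ⟪z, T w⟫) := by field_simp

end InnerProduct

theorem stmt_2_general {N : ℕ} (hN : 2 ≤ N) (A : Matrix (Fin N) (Fin N) ℝ) (b : ℝ)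
    (γ_A : ℝ) :
    (∀ w z : EuclideanSpace ℝ (Fin N),
      ‖z‖ ^ 2 * (inner ℝ w (mulE A w) : ℝ)
        + b * ((inner ℝ w z : ℝ) * (inner ℝ z (mulE A w) : ℝ))
        ≥ γ_A * (‖z‖ ^ 2 * ‖w‖ ^ 2))
    ↔ (∀ w : EuclideanSpace ℝ (Fin N), ‖w‖ = 1 →
      (1 + b / 2) * (inner ℝ w (mulE A w) : ℝ) - (|b| / 2) * ‖mulE A w‖ ≥ γ_A) := by
  have hE : 2 ≤ finrank ℝ (EuclideanSpace ℝ (Fin N)) := by simpa using hN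
  refine (forall_mul_norm_sq_le_iff_forall_norm_eq_one (Matrix.toEuclideanLin A) b γ_A).trans
    (forall₂_congr fun w hw => ?_)
  rw [forall_le_add_mul_inner_mul_inner_iff hE hw, add_mul, one_mul]
  exact Iff.rfl

/-- Equivalence of the two forms of the `L^p`-dissipativity condition for real matrices
(`N ≥ 2`). -/
theorem stmt_2 {N : ℕ} (hN : 2 ≤ N) (A : Matrix (Fin N) (Fin N) ℝ) (b : ℝ)
    (hb : -1 < b) (γ_A : ℝ) (hγ : 0 < γ_A) :
    (∀ w z : EuclideanSpace ℝ (Fin N),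
      ‖z‖ ^ 2 * (inner ℝ w (mulE A w) : ℝ)
        + b * ((inner ℝ w z : ℝ) * (inner ℝ z (mulE A w) : ℝ))
        ≥ γ_A * (‖z‖ ^ 2 * ‖w‖ ^ 2))
    ↔ (∀ w : EuclideanSpace ℝ (Fin N), ‖w‖ = 1 →
      (1 + b / 2) * (inner ℝ w (mulE A w) : ℝ) - (|b| / 2) * ‖mulE A w‖ ≥ γ_A) :=
  stmt_2_general hN A b γ_A
end

section
/- Let N ≥ 2, let A ∈ ℝ^{N,N}, and let b ∈ ℝ with b > −1. Then the following two statements are equivalent: (i) there exists γ_A > 0 such that (1 + b/2)·⟨w,Aw⟩ − (|b|/2)·|Aw| ≥ γ_A for all w ∈ ℝ^N with |w| = 1; (ii) A is invertible and μ₁(A) > |b|/(2+b). -/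
/-! For invertible `A`, `μ₁(A)` is the infimum of `⟨u, Au⟩ / |Au|` over the unit sphere, while (i)
asks for a positive lower bound of `(1 + b/2)⟨u, Au⟩ - (|b|/2)|Au|` there. Both functions are
continuous on the compact sphere, so their extrema are attained and each condition becomes the
pointwise inequality `|b|/(2+b) < ⟨u, Au⟩ / |Au|`. Invertibility follows from (i) because `Au = 0`
makes its left-hand side vanish. -/

open Set Metric

section CompactSpace

variable {α : Type*} [TopologicalSpace α] [CompactSpace α] {f : α → ℝ}

lemma Continuous.lt_ciInf_iff [Nonempty α] (hf : Continuous f) {c : ℝ} :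
    c < ⨅ x, f x ↔ ∀ x, c < f x := by
  refine ⟨fun h x => h.trans_le (ciInf_le (isCompact_range hf).bddBelow x), fun h => ?_⟩
  obtain ⟨x, hx⟩ := (isCompact_range hf).sInf_mem (range_nonempty f)
  rw [← sInf_range, ← hx]
  exact h x

lemma Continuous.exists_pos_forall_ge_iff_forall_pos (hf : Continuous f) :
    (∃ γ, 0 < γ ∧ ∀ x, f x ≥ γ) ↔ ∀ x, 0 < f x := by
  refine ⟨fun ⟨γ, hγ, h⟩ x => hγ.trans_le (h x), fun h => ?_⟩
  cases isEmpty_or_nonempty α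
  · exact ⟨1, one_pos, isEmptyElim⟩
  · exact ⟨⨅ x, f x, hf.lt_ciInf_iff.2 h, ciInf_le (isCompact_range hf).bddBelow⟩

end CompactSpace

section Matrix

variable {N : ℕ} {A : Matrix (Fin N) (Fin N) ℝ}

lemma mulE_smul (A : Matrix (Fin N) (Fin N) ℝ) (r : ℝ) (w : EuclideanSpace ℝ (Fin N)) :
    mulE A (r • w) = r • mulE A w :=
  map_smul (Matrix.toEuclideanLin A) r w

@[fun_prop]
lemma continuous_mulE (A : Matrix (Fin N) (Fin N) ℝ) : Continuous (mulE A) :=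
  LinearMap.continuous_of_finiteDimensional (Matrix.toEuclideanLin A)

lemma injective_mulE_iff_isUnit : Function.Injective (mulE A) ↔ IsUnit A := by
  have h : mulE A = WithLp.toLp 2 ∘ A.mulVec ∘ WithLp.ofLp := rfl
  rw [h, (WithLp.toLp_injective 2).of_comp_iff,
    Function.Injective.of_comp_iff' _ (WithLp.ofLp_bijective 2), Matrix.mulVec_injective_iff_isUnit]

lemma isUnit_of_forall_norm_eq_one_mulE_ne_zero
    (h : ∀ u : EuclideanSpace ℝ (Fin N), ‖u‖ = 1 → mulE A u ≠ 0) : IsUnit A := by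
  refine injective_mulE_iff_isUnit.1 <| (injective_iff_map_eq_zero (Matrix.toEuclideanLin A)).2
    fun w hw => ?_
  by_contra hw0
  refine h _ (norm_smul_inv_norm (𝕜 := ℝ) hw0) ?_
  rw [mulE_smul]
  simp [mulE, hw]

lemma mulE_ne_zero_of_mem_sphere (hA : IsUnit A) (u : sphere (0 : EuclideanSpace ℝ (Fin N)) 1) :
    mulE A u ≠ 0 :=
  (map_ne_zero_iff _ (injective_mulE_iff_isUnit.2 hA)).2 (ne_zero_of_mem_unit_sphere u)

lemma mu1_eq_iInf_sphere (hA : IsUnit A) :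
    mu1 A = ⨅ u : sphere (0 : EuclideanSpace ℝ (Fin N)) 1,
      inner ℝ (u : EuclideanSpace ℝ (Fin N)) (mulE A u) / ‖mulE A u‖ := by
  rw [mu1, ← sInf_range]
  congr 1
  ext x
  constructor
  · rintro ⟨w, hw, hAw, rfl⟩
    refine ⟨⟨‖w‖⁻¹ • w, by simpa using norm_smul_inv_norm (𝕜 := ℝ) hw⟩, ?_⟩
    simp only [mulE_smul, real_inner_smul_left, real_inner_smul_right, norm_smul, norm_inv,
      norm_norm]
    field_simp
  · rintro ⟨u, rfl⟩
    exact ⟨u, ne_zero_of_mem_unit_sphere u, mulE_ne_zero_of_mem_sphere hA u,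
      by rw [mem_sphere_zero_iff_norm.1 u.2, one_mul]⟩

lemma sub_pos_iff_abs_div_lt_div {b p q : ℝ} (hb : -1 < b) (hq : 0 < q) :
    0 < (1 + b / 2) * p - |b| / 2 * q ↔ |b| / (2 + b) < p / q := by
  rw [div_lt_div_iff₀ (by linarith) hq]
  constructor <;> intro h <;> linarith

lemma exists_pos_le_iff_lt_mu1 (hN : 0 < N) (hA : IsUnit A) {b : ℝ} (hb : -1 < b) :
    (∃ γ_A : ℝ, 0 < γ_A ∧ ∀ w : EuclideanSpace ℝ (Fin N), ‖w‖ = 1 →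
      (1 + b / 2) * (inner ℝ w (mulE A w) : ℝ) - (|b| / 2) * ‖mulE A w‖ ≥ γ_A) ↔
      |b| / (2 + b) < mu1 A := by
  have : Nonempty (Fin N) := ⟨⟨0, hN⟩⟩
  have : Nonempty (sphere (0 : EuclideanSpace ℝ (Fin N)) 1) :=
    (NormedSpace.sphere_nonempty.2 zero_le_one).to_subtype
  have hAu (u : sphere (0 : EuclideanSpace ℝ (Fin N)) 1) : 0 < ‖mulE A u‖ :=
    norm_pos_iff.2 (mulE_ne_zero_of_mem_sphere hA u)
  rw [mu1_eq_iInf_sphere hA,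
    Continuous.lt_ciInf_iff (.div₀ (by fun_prop) (by fun_prop) fun u => (hAu u).ne')]
  simp_rw [← sub_pos_iff_abs_div_lt_div hb (hAu _)]
  rw [← Continuous.exists_pos_forall_ge_iff_forall_pos (by fun_prop)]
  simp [Subtype.forall]

end Matrix

/-- The unit-vector form of the `L^p`-dissipativity condition is equivalent to the
antieigenvalue condition, for real matrices with `N ≥ 2`. -/
theorem stmt_4 {N : ℕ} (hN : 2 ≤ N) (A : Matrix (Fin N) (Fin N) ℝ) (b : ℝ)
    (hb : -1 < b) :
    (∃ γ_A : ℝ, 0 < γ_A ∧ ∀ w : EuclideanSpace ℝ (Fin N), ‖w‖ = 1 →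
      (1 + b / 2) * (inner ℝ w (mulE A w) : ℝ) - (|b| / 2) * ‖mulE A w‖ ≥ γ_A)
    ↔ (IsUnit A ∧ mu1 A > |b| / (2 + b)) := by
  constructor
  · rintro ⟨γ, hγ, hγA⟩
    have hA : IsUnit A := isUnit_of_forall_norm_eq_one_mulE_ne_zero fun u hu hAu => by
      have := hγA u hu
      simp only [hAu, inner_zero_right, norm_zero] at this
      linarith
    exact ⟨hA, (exists_pos_le_iff_lt_mu1 (by omega) hA hb).1 ⟨γ, hγ, hγA⟩⟩
  · rintro ⟨hA, hμ⟩
    exact (exists_pos_le_iff_lt_mu1 (by omega) hA hb).2 hμ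
end

section
/- Let N ≥ 2, let A ∈ ℝ^{N,N}, let b ∈ ℝ, and let w ∈ ℝ^N with |w| = 1. Then the minimum over all z ∈ ℝ^N with |z| = 1 of the quantity ⟨w,Aw⟩ + b·⟨w,z⟩·⟨z,Aw⟩ exists and equals (1 + b/2)·⟨w,Aw⟩ − (|b|/2)·|Aw|. -/
open Module Submodule

section InnerProductSpace

variable {E : Type*} [NormedAddCommGroup E] [InnerProductSpace ℝ E]

theorem orthogonal_span_singleton_ne_bot [FiniteDimensional ℝ E] (hE : 2 ≤ finrank ℝ E)
    (w : E) : (ℝ ∙ w)ᗮ ≠ ⊥ := by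
  intro h
  have hspan : finrank ℝ (ℝ ∙ w) ≤ 1 := by simpa using finrank_span_le_card ({w} : Set E)
  have hsum := finrank_add_finrank_orthogonal (ℝ ∙ w)
  rw [h, finrank_bot] at hsum
  omega

theorem exists_norm_eq_one_inner_eq_zero_s9 {w : E} (h : (ℝ ∙ w)ᗮ ≠ ⊥) :
    ∃ z : E, ‖z‖ = 1 ∧ inner ℝ w z = 0 := by
  obtain ⟨x, hx, hx0⟩ := exists_mem_ne_zero_of_ne_bot h
  refine ⟨‖x‖⁻¹ • x, norm_smul_inv_norm hx0, ?_⟩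
  rw [real_inner_smul_right, mem_orthogonal_singleton_iff_inner_right.mp hx, mul_zero]

theorem exists_norm_eq_one_inner_eq_norm {w : E} (hw : ‖w‖ = 1) (v : E) :
    ∃ y : E, ‖y‖ = 1 ∧ inner ℝ y v = ‖v‖ := by
  rcases eq_or_ne v 0 with rfl | hv
  · exact ⟨w, hw, by simp⟩
  · refine ⟨‖v‖⁻¹ • v, norm_smul_inv_norm hv, ?_⟩
    rw [real_inner_smul_left, real_inner_self_eq_norm_sq]
    field_simp

theorem inner_reflection_orthogonal_singleton {z : E} (hz : ‖z‖ = 1) (w v : E) :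
    inner ℝ ((ℝ ∙ z)ᗮ.reflection w) v = inner ℝ w v - 2 * (inner ℝ w z * inner ℝ z v) := by
  rw [reflection_orthogonal_apply, reflection_singleton_apply, hz]
  simp only [inner_neg_left, inner_sub_left, two_smul, inner_add_left, real_inner_smul_left,
    real_inner_comm z w, RCLike.ofReal_real_eq_id, id, one_pow, div_one]
  ring

theorem inner_sub_norm_div_two_le_inner_mul_inner {w z : E} (hw : ‖w‖ = 1) (hz : ‖z‖ = 1)
    (v : E) : (inner ℝ w v - ‖v‖) / 2 ≤ inner ℝ w z * inner ℝ z v := by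
  have hcs := real_inner_le_norm ((ℝ ∙ z)ᗮ.reflection w) v
  rw [inner_reflection_orthogonal_singleton hz, LinearIsometryEquiv.norm_map, hw, one_mul] at hcs
  linarith

theorem exists_norm_eq_one_inner_mul_inner_eq {w : E} (hw : ‖w‖ = 1) (h : (ℝ ∙ w)ᗮ ≠ ⊥)
    (v : E) : ∃ z : E, ‖z‖ = 1 ∧ inner ℝ w z * inner ℝ z v = (inner ℝ w v - ‖v‖) / 2 := by
  obtain ⟨y, hy, hyv⟩ := exists_norm_eq_one_inner_eq_norm hw v
  rcases eq_or_ne w y with rfl | hwy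
  · obtain ⟨z, hz, hwz⟩ := exists_norm_eq_one_inner_eq_zero_s9 h
    exact ⟨z, hz, by rw [hwz, hyv]; ring⟩
  · have hsub : w - y ≠ 0 := sub_ne_zero.mpr hwy
    have hz : ‖‖w - y‖⁻¹ • (w - y)‖ = 1 := norm_smul_inv_norm hsub
    refine ⟨_, hz, ?_⟩
    have hrefl := inner_reflection_orthogonal_singleton hz w v
    simp only [span_singleton_smul_eq (r := ‖w - y‖⁻¹) (by simpa using hsub)] at hrefl
    rw [reflection_sub (hw.trans hy.symm), hyv] at hrefl
    linarith

theorem isLeast_inner_mul_inner {w : E} (hw : ‖w‖ = 1) (h : (ℝ ∙ w)ᗮ ≠ ⊥) (v : E) :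
    IsLeast {x | ∃ z : E, ‖z‖ = 1 ∧ x = inner ℝ w z * inner ℝ z v}
      ((inner ℝ w v - ‖v‖) / 2) := by
  obtain ⟨z, hz, hzv⟩ := exists_norm_eq_one_inner_mul_inner_eq hw h v
  exact ⟨⟨z, hz, hzv.symm⟩, fun _ ⟨z, hz, hx⟩ =>
    hx ▸ inner_sub_norm_div_two_le_inner_mul_inner hw hz v⟩

end InnerProductSpace

/-- For a unit vector `w`, the minimum over unit vectors `z` of
`⟨w,Aw⟩ + b·⟨w,z⟩·⟨z,Aw⟩` exists and equals `(1 + b/2)·⟨w,Aw⟩ − (|b|/2)·|Aw|` (`N ≥ 2`). -/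
theorem stmt_9 {N : ℕ} (hN : 2 ≤ N) (A : Matrix (Fin N) (Fin N) ℝ) (b : ℝ)
    (w : EuclideanSpace ℝ (Fin N)) (hw : ‖w‖ = 1) :
    IsLeast {x : ℝ | ∃ z : EuclideanSpace ℝ (Fin N), ‖z‖ = 1 ∧
        x = (inner ℝ w (mulE A w) : ℝ) + b * ((inner ℝ w z : ℝ) * (inner ℝ z (mulE A w) : ℝ))}
      ((1 + b / 2) * (inner ℝ w (mulE A w) : ℝ) - (|b| / 2) * ‖mulE A w‖) := by
  have horth := orthogonal_span_singleton_ne_bot (by rwa [finrank_euclideanSpace_fin]) w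
  have hscaled (z : EuclideanSpace ℝ (Fin N)) :
      inner ℝ w z * inner ℝ z (b • mulE A w) = b * (inner ℝ w z * inner ℝ z (mulE A w)) := by
    rw [real_inner_smul_right]; ring
  have hvalue : (1 + b / 2) * inner ℝ w (mulE A w) - |b| / 2 * ‖mulE A w‖
      = inner ℝ w (mulE A w) + (inner ℝ w (b • mulE A w) - ‖b • mulE A w‖) / 2 := by
    rw [real_inner_smul_right, norm_smul, Real.norm_eq_abs]; ring
  obtain ⟨⟨z, hz, hmin⟩, hlower⟩ := isLeast_inner_mul_inner hw horth (b • mulE A w)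
  rw [hvalue]
  refine ⟨⟨z, hz, by rw [hmin, hscaled]⟩, ?_⟩
  rintro _ ⟨y, hy, rfl⟩
  have hy_bound := hlower ⟨y, hy, rfl⟩
  rw [hscaled] at hy_bound
  linarith
end

section
/- Let α ∈ ℂ and 1 < p < ∞. Then there exists γ_α > 0 such that (p/2)·Re α − (|p−2|/2)·|α| ≥ γ_α if and only if (|p−2|/(2·√(p−1)))·|Im α| < Re α. -/
/-!
Write `α = x + iy`. Both conditions force `x > 0`, and after squaring they compare the same
quadratic form: since `p² = (p - 2)² + 4(p - 1)` and `|α|² = x² + y²`,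
`(p x)² - ((p - 2) |α|)² = (2 √(p - 1) x)² - ((p - 2) y)²`.
-/

lemma lt_iff_pos_and_sq_lt {u v : ℝ} (hv : 0 ≤ v) : v < u ↔ 0 < u ∧ v ^ 2 < u ^ 2 := by
  constructor
  · intro h
    have hu : 0 < u := hv.trans_lt h
    exact ⟨hu, (pow_lt_pow_iff_left₀ hv hu.le two_ne_zero).mpr h⟩
  · rintro ⟨hu, h⟩
    exact (pow_lt_pow_iff_left₀ hv hu.le two_ne_zero).mp h

lemma lt_iff_lt_of_sq_sub_sq_eq {u v u' v' : ℝ} (hv : 0 ≤ v) (hv' : 0 ≤ v')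
    (hpos : 0 < u ↔ 0 < u') (hsq : u ^ 2 - v ^ 2 = u' ^ 2 - v' ^ 2) : v < u ↔ v' < u' := by
  rw [lt_iff_pos_and_sq_lt hv, lt_iff_pos_and_sq_lt hv', hpos, ← sub_pos (b := v ^ 2), hsq, sub_pos]

lemma sq_mul_re_sub_sq_mul_norm {p : ℝ} (hp : 1 ≤ p) (α : ℂ) :
    (p * α.re) ^ 2 - (|p - 2| * ‖α‖) ^ 2
      = (2 * √(p - 1) * α.re) ^ 2 - (|p - 2| * |α.im|) ^ 2 := by
  have hnorm : ‖α‖ ^ 2 = α.re ^ 2 + α.im ^ 2 := by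
    rw [Complex.sq_norm, Complex.normSq_apply]; ring
  simp only [mul_pow, sq_abs, hnorm, Real.sq_sqrt (sub_nonneg.mpr hp)]
  ring

/-- The scalar complex cone condition: existence of `γ_α > 0` with
`(p/2)·Re α − (|p−2|/2)·|α| ≥ γ_α` is equivalent to
`(|p−2|/(2√(p−1)))·|Im α| < Re α`. -/
theorem stmt_11 (α : ℂ) (p : ℝ) (hp1 : 1 < p) :
    (∃ γ_α : ℝ, 0 < γ_α ∧ p / 2 * α.re - |p - 2| / 2 * ‖α‖ ≥ γ_α)
    ↔ |p - 2| / (2 * Real.sqrt (p - 1)) * |α.im| < α.re := by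
  have hsqrt : 0 < √(p - 1) := Real.sqrt_pos.mpr (sub_pos.mpr hp1)
  have hgap : (∃ γ : ℝ, 0 < γ ∧ p / 2 * α.re - |p - 2| / 2 * ‖α‖ ≥ γ)
      ↔ |p - 2| * ‖α‖ < p * α.re := by
    constructor
    · rintro ⟨γ, hγ, hle⟩
      linarith
    · intro h
      exact ⟨_, by linarith, le_rfl⟩
  rw [hgap, div_mul_eq_mul_div, div_lt_iff₀ (by positivity), mul_comm α.re]
  refine lt_iff_lt_of_sq_sub_sq_eq (by positivity) (by positivity) ?_
    (sq_mul_re_sub_sq_mul_norm hp1.le α)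
  rw [mul_pos_iff_of_pos_left (by linarith), mul_pos_iff_of_pos_left (by positivity)]
end

section
/- Let α ∈ ℂ with α ≠ 0 and let 1 < p < ∞. Then (|p−2|/(2·√(p−1)))·|Im α| < Re α if and only if |arg α| < arccos(|p−2|/p), where arg α ∈ (−π, π] denotes the principal argument of α. -/
/-!
Since `cos` is strictly decreasing on `[0, π]` and `cos (arg α) = Re α / |α|`, the angular condition
reads `(|p - 2| / p) |α| < Re α`. Both conditions force `Re α > 0`, and after squaring they compare
`(p - 2)² Im² α` with `4 (p - 1) Re² α`, resp. `(p - 2)² (Re² α + Im² α)` with `p² Re² α`; these are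
the same comparison because `(p - 2)² + 4 (p - 1) = p²`.
-/

open Complex

theorem Complex.abs_arg_lt_arccos_iff {α : ℂ} (hα : α ≠ 0) {c : ℝ} (hc₀ : -1 ≤ c) (hc₁ : c ≤ 1) :
    |α.arg| < Real.arccos c ↔ c * ‖α‖ < α.re := by
  have harccos : Real.arccos c ∈ Set.Icc 0 Real.pi :=
    ⟨Real.arccos_nonneg c, Real.arccos_le_pi c⟩
  have harg : |α.arg| ∈ Set.Icc 0 Real.pi := ⟨abs_nonneg _, abs_arg_le_pi α⟩
  rw [← Real.strictAntiOn_cos.lt_iff_gt harccos harg, Real.cos_arccos hc₀ hc₁, Real.cos_abs,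
    cos_arg hα, lt_div_iff₀ (norm_pos_iff.mpr hα)]

lemma lt_iff_sq_lt_sq_of_nonneg {R : Type*} [Semiring R] [LinearOrder R] [IsStrictOrderedRing R]
    {a b : R} (ha : 0 ≤ a) : a < b ↔ 0 < b ∧ a ^ 2 < b ^ 2 :=
  ⟨fun h ↦ ⟨ha.trans_lt h, pow_lt_pow_left₀ h ha two_ne_zero⟩,
    fun ⟨hb, h⟩ ↦ (sq_lt_sq₀ ha hb.le).mp h⟩

theorem Complex.div_mul_abs_im_lt_re_iff {k s p : ℝ} (hk : 0 ≤ k) (hs : 0 < s) (hp : 0 < p)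
    (hksp : k ^ 2 + s ^ 2 = p ^ 2) (α : ℂ) :
    k / s * |α.im| < α.re ↔ k / p * ‖α‖ < α.re := by
  have hnorm : ‖α‖ ^ 2 = α.re ^ 2 + α.im ^ 2 := by rw [Complex.sq_norm, normSq_apply]; ring
  rw [div_mul_eq_mul_div, div_lt_iff₀ hs, div_mul_eq_mul_div, div_lt_iff₀ hp,
    lt_iff_sq_lt_sq_of_nonneg (mul_nonneg hk (abs_nonneg α.im)),
    lt_iff_sq_lt_sq_of_nonneg (mul_nonneg hk (norm_nonneg α)), mul_pos_iff_of_pos_right hs,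
    mul_pos_iff_of_pos_right hp, mul_pow, mul_pow, mul_pow, mul_pow, sq_abs, hnorm, ← hksp]
  refine and_congr_right fun _ ↦ ⟨fun h ↦ ?_, fun h ↦ ?_⟩ <;> linarith

/-- The two forms of the scalar complex cone condition are equivalent:
`(|p−2|/(2√(p−1)))·|Im α| < Re α ↔ |arg α| < arccos(|p−2|/p)`. -/
theorem stmt_12 (α : ℂ) (hα : α ≠ 0) (p : ℝ) (hp1 : 1 < p) :
    |p - 2| / (2 * Real.sqrt (p - 1)) * |α.im| < α.re
    ↔ |α.arg| < Real.arccos (|p - 2| / p) := by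
  have hp : 0 < p := by linarith
  have hpythagoras : |p - 2| ^ 2 + (2 * Real.sqrt (p - 1)) ^ 2 = p ^ 2 := by
    rw [sq_abs, mul_pow, Real.sq_sqrt (by linarith)]; ring
  have hc₀ : -1 ≤ |p - 2| / p := by linarith [div_nonneg (abs_nonneg (p - 2)) hp.le]
  have hc₁ : |p - 2| / p ≤ 1 := (div_le_one hp).mpr (abs_le.mpr ⟨by linarith, by linarith⟩)
  rw [div_mul_abs_im_lt_re_iff (abs_nonneg _) (by positivity) hp hpythagoras,
    abs_arg_lt_arccos_iff hα hc₀ hc₁]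
end
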